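/- For every natural number r, T(3^(2^r), 3) ≤ 4r + 3. -/

import Mathlib

/-- The outcome of a cascaded test `t` (a list of items) on a defective set `S`:
the first element of `t` belonging to `S`, or `none` if there is none. -/
def outcome {N : ℕ} (t : List (Fin N)) (S : Finset (Fin N)) : Option (Fin N) :=
  (t.filter (fun x => x ∈ S)).head?

/-- A testing design `𝒯` (an indexed family of tests) is feasible for `(N, K)` if the
map sending each `S ⊆ Fin N` with `|S| ≤ K` to its vector of test outcomes is injective
on `{S | |S| ≤ K}`. -/
def Feasible (N K : ℕ) {T : ℕ} (𝒯 : Fin T → List (Fin N)) : Prop :=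
  Set.InjOn (fun (S : Finset (Fin N)) => fun i : Fin T => outcome (𝒯 i) S)
    {S : Finset (Fin N) | S.card ≤ K}

/-- `TNK N K`: the minimum number of tests over all duplicate-free testing designs
feasible for `(N, K)`. -/
noncomputable def TNK (N K : ℕ) : ℕ :=
  sInf {T : ℕ | ∃ 𝒯 : Fin T → List (Fin N), (∀ i, (𝒯 i).Nodup) ∧ Feasible N K 𝒯}

/-- `fT 𝒯 S v`: the number of tests in the design `𝒯` whose outcome on `S` is `some v`. -/
def fT {N T : ℕ} (𝒯 : Fin T → List (Fin N)) (S : Finset (Fin N)) (v : Fin N) : ℕ :=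
  (Finset.univ.filter (fun i : Fin T => outcome (𝒯 i) S = some v)).card

/-- A design is in systematic form if every test is nonempty and the first element of
each test does not occur in any other test. -/
def Systematic {N T : ℕ} (𝒯 : Fin T → List (Fin N)) : Prop :=
  ∀ i : Fin T, 𝒯 i ≠ [] ∧ ∀ u : Fin N, (𝒯 i).head? = some u → ∀ j : Fin T, j ≠ i → u ∉ 𝒯 j

/-!
A permutation `σ` of the items gives the test `List.ofFn σ.symm`, which lists the items in
increasing `σ`-order, so its outcome on `S` is the `σ`-least element of `S`. A design identifies
every `S` with `|S| ≤ K` as soon as each element of each such `S` comes first in some test.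
For `|S| ≤ 3` the natural order and its reverse take care of the least and the greatest element
of `S`; what remains is a family of orders in which, for every `a < m < b`, some order puts `m`
before `a` and `b`. Reading `Fin (n * n)` lexicographically as `Fin n × Fin n`, such a family for
`n` lifts to `n * n` by applying each of its orders to both coordinates and adding the two orders
that reverse exactly one coordinate. Starting from the transposition `(0 1)` on `Fin 3`, this gives
`2r + 1` orders for `3 ^ 2 ^ r` items, hence a design with `2r + 3 ≤ 4r + 3` tests.
-/

open Equiv

theorem mem_of_outcome_eq_some {N : ℕ} {t : List (Fin N)} {S : Finset (Fin N)} {x : Fin N}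
    (h : outcome t S = some x) : x ∈ S := by
  rw [outcome, List.head?_filter] at h
  simpa using List.find?_some h

theorem outcome_ofFn_symm {N : ℕ} (σ : Perm (Fin N)) {S : Finset (Fin N)} {x : Fin N}
    (hx : x ∈ S) (hmin : ∀ s ∈ S, σ x ≤ σ s) : outcome (List.ofFn σ.symm) S = some x := by
  rw [outcome, List.head?_filter, List.find?_eq_some_iff_getElem]
  refine ⟨by simpa using hx, σ x, by simp, by simp, fun j hj => ?_⟩
  have hjN : j < N := hj.trans (σ x).isLt
  have hs : σ.symm ⟨j, hjN⟩ ∉ S := fun hs => (hmin _ hs).not_gt (by simpa [Fin.lt_def] using hj)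
  simpa using hs

theorem feasible_of_forall_exists_outcome_eq {N K T : ℕ} (𝒯 : Fin T → List (Fin N))
    (h : ∀ S : Finset (Fin N), S.card ≤ K → ∀ x ∈ S, ∃ i, outcome (𝒯 i) S = some x) :
    Feasible N K 𝒯 := by
  have subset : ∀ S₁ S₂ : Finset (Fin N), S₁.card ≤ K →
      (∀ i, outcome (𝒯 i) S₁ = outcome (𝒯 i) S₂) → S₁ ⊆ S₂ := fun S₁ S₂ h₁ heq x hx => by
    obtain ⟨i, hi⟩ := h S₁ h₁ x hx
    exact mem_of_outcome_eq_some ((heq i).symm.trans hi)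
  intro S₁ h₁ S₂ h₂ heq
  exact (subset S₁ S₂ h₁ (congrFun heq)).antisymm
    (subset S₂ S₁ h₂ fun i => (congrFun heq i).symm)

theorem TNK_le_length {N K : ℕ} (F : List (Perm (Fin N)))
    (hF : ∀ S : Finset (Fin N), S.card ≤ K → ∀ x ∈ S, ∃ σ ∈ F, ∀ s ∈ S, σ x ≤ σ s) :
    TNK N K ≤ F.length := by
  refine Nat.sInf_le ⟨fun i => List.ofFn (F.get i).symm, fun i => ?_, ?_⟩
  · exact List.nodup_ofFn.mpr (F.get i).symm.injective
  · refine feasible_of_forall_exists_outcome_eq _ fun S hS x hx => ?_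
    obtain ⟨σ, hσ, hmin⟩ := hF S hS x hx
    obtain ⟨i, rfl⟩ := List.mem_iff_get.mp hσ
    exact ⟨i, outcome_ofFn_symm _ hx hmin⟩

theorem finProdFinEquiv_lt_finProdFinEquiv {m n : ℕ} {p q : Fin m × Fin n} :
    finProdFinEquiv p < finProdFinEquiv q ↔ p.1 < q.1 ∨ p.1 = q.1 ∧ p.2 < q.2 := by
  obtain ⟨⟨a, ha⟩, ⟨b, hb⟩⟩ := p
  obtain ⟨⟨c, hc⟩, ⟨d, hd⟩⟩ := q
  simp only [Fin.lt_def, finProdFinEquiv_apply_val, Fin.mk.injEq]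
  constructor
  · intro h
    rcases lt_trichotomy a c with hac | rfl | hac
    · exact Or.inl hac
    · exact Or.inr ⟨rfl, by omega⟩
    · nlinarith
  · rintro (hac | ⟨rfl, hbd⟩)
    · nlinarith
    · omega

def SeparatesMiddles {n : ℕ} (F : List (Perm (Fin n))) : Prop :=
  ∀ a m b : Fin n, a < m → m < b → ∃ σ ∈ F, σ m < σ a ∧ σ m < σ b

theorem SeparatesMiddles.exists_le_of_card_le_three {n : ℕ} {F : List (Perm (Fin n))}
    (hF : SeparatesMiddles F) (S : Finset (Fin n)) (hS : S.card ≤ 3) (x : Fin n) (hx : x ∈ S) :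
    ∃ σ ∈ Equiv.refl _ :: Fin.revPerm :: F, ∀ s ∈ S, σ x ≤ σ s := by
  by_cases hmin : ∀ s ∈ S, x ≤ s
  · exact ⟨Equiv.refl _, by simp, hmin⟩
  by_cases hmax : ∀ s ∈ S, s ≤ x
  · exact ⟨Fin.revPerm, by simp, fun s hs => by simpa using hmax s hs⟩
  push Not at hmin hmax
  obtain ⟨a, ha, hax⟩ := hmin
  obtain ⟨b, hb, hxb⟩ := hmax
  have hS_eq : S = {a, x, b} := by
    refine (Finset.eq_of_subset_of_card_le ?_ ?_).symm
    · simp [Finset.insert_subset_iff, ha, hx, hb]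
    · rw [Finset.card_eq_three.mpr ⟨a, x, b, hax.ne, (hax.trans hxb).ne, hxb.ne, rfl⟩]
      exact hS
  obtain ⟨σ, hσ, hxa, hxb⟩ := hF a x b hax hxb
  refine ⟨σ, by simp [hσ], fun s hs => ?_⟩
  simp only [hS_eq, Finset.mem_insert, Finset.mem_singleton] at hs
  rcases hs with rfl | rfl | rfl
  exacts [hxa.le, le_rfl, hxb.le]

def liftMiddles {n : ℕ} (F : List (Perm (Fin n))) : List (Perm (Fin (n * n))) :=
  finProdFinEquiv.permCongr ((Equiv.refl _).prodCongr Fin.revPerm) ::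
  finProdFinEquiv.permCongr (Fin.revPerm.prodCongr (Equiv.refl _)) ::
  F.map fun σ => finProdFinEquiv.permCongr (σ.prodCongr σ)

theorem SeparatesMiddles.liftMiddles {n : ℕ} {F : List (Perm (Fin n))}
    (hF : SeparatesMiddles F) : SeparatesMiddles (liftMiddles F) := by
  intro a m b
  obtain ⟨⟨a₁, a₂⟩, rfl⟩ := finProdFinEquiv.surjective a
  obtain ⟨⟨m₁, m₂⟩, rfl⟩ := finProdFinEquiv.surjective m
  obtain ⟨⟨b₁, b₂⟩, rfl⟩ := finProdFinEquiv.surjective b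
  simp only [_root_.liftMiddles, List.mem_cons, List.mem_map, exists_eq_or_imp,
    exists_exists_and_eq_and, permCongr_apply, symm_apply_apply, prodCongr_apply, Prod.map,
    finProdFinEquiv_lt_finProdFinEquiv, refl_apply, Fin.revPerm_apply, Fin.rev_lt_rev, Fin.rev_inj]
  rintro (ham | ⟨rfl, ham⟩) (hmb | ⟨rfl, hmb⟩)
  · obtain ⟨σ, hσ, h₁, h₂⟩ := hF a₁ m₁ b₁ ham hmb
    exact Or.inr (Or.inr ⟨σ, hσ, Or.inl h₁, Or.inl h₂⟩)
  · exact Or.inr (Or.inl ⟨Or.inl ham, Or.inr ⟨rfl, hmb⟩⟩)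
  · exact Or.inl ⟨Or.inr ⟨rfl, ham⟩, Or.inl hmb⟩
  · obtain ⟨σ, hσ, h₁, h₂⟩ := hF a₂ m₂ b₂ ham hmb
    exact Or.inr (Or.inr ⟨σ, hσ, Or.inr ⟨rfl, h₁⟩, Or.inr ⟨rfl, h₂⟩⟩)

theorem exists_separatesMiddles (r : ℕ) :
    ∃ F : List (Perm (Fin (3 ^ 2 ^ r))), F.length = 2 * r + 1 ∧ SeparatesMiddles F := by
  induction r with
  | zero => exact ⟨[swap 0 1], rfl, by unfold SeparatesMiddles; decide⟩
  | succ r ih =>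
    obtain ⟨F, hlen, hF⟩ := ih
    rw [pow_succ, pow_mul, sq]
    exact ⟨liftMiddles F, by simp [liftMiddles, hlen]; ring, hF.liftMiddles⟩

theorem stmt18 (r : ℕ) : TNK (3 ^ 2 ^ r) 3 ≤ 4 * r + 3 := by
  obtain ⟨F, hlen, hF⟩ := exists_separatesMiddles r
  calc TNK (3 ^ 2 ^ r) 3 ≤ (Equiv.refl _ :: Fin.revPerm :: F).length :=
        TNK_le_length _ hF.exists_le_of_card_le_three
    _ ≤ 4 * r + 3 := by simp [hlen]; omega
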